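/- For every τ_0 ∈ (0,1), c ∈ (0,1), and a > 0, there exist constants c_1, C_1 > 0 and N such that the following holds for all n ≥ N: for all M dividing n with 3 ≤ M ≤ a·n^{τ_0}, all δ ∈ (0,1) with n^δ an even integer and n^δ < n/M, and S_0 = n^{τ_0}, one has c_1·n²/S_0 ≤ E_1+E_2+E_3+E_4 ≤ C_1·(n²/S_0 + M·n^{2δ}/S_0²). -/

import Mathlib

open Real Finset

/-- The `i`-th point of the discrete circle `P_n ⊂ ℝ²`:
`x_i = (cos(2πi/n), sin(2πi/n))`. -/
noncomputable def circlePt (n : ℕ) (i : Fin n) : EuclideanSpace ℝ (Fin 2) :=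
  WithLp.toLp 2 (fun j => if j = 0 then Real.cos (2 * Real.pi * (i.val : ℝ) / n)
           else Real.sin (2 * Real.pi * (i.val : ℝ) / n))

/-- With the indices `{0, …, n−1}` partitioned into `M` blocks of `n/M` consecutive indices,
`i ∼ j` iff `i` and `j` lie in the same block. -/
def sameBlock (n M : ℕ) (i j : Fin n) : Prop :=
  i.val / (n / M) = j.val / (n / M)

instance (n M : ℕ) (i j : Fin n) : Decidable (sameBlock n M i j) := by
  unfold sameBlock; infer_instance

/-- `T_m` for a block with last index `im` (indices mod `n`) and `d = n^δ`:
pairs `(k,ℓ)` with `im − d/2 + 1 ≤ k ≤ im` and `im + 1 ≤ ℓ ≤ im + d/2`. -/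
def TmSet (n im d : ℕ) : Finset (Fin n × Fin n) :=
  Finset.univ.filter (fun p : Fin n × Fin n =>
    (∃ a < d / 2, p.1.val = (im + n - a) % n) ∧
    (∃ b < d / 2, p.2.val = (im + (b + 1)) % n))

/-- `T_0`: ordered pairs of distinct indices lying in different blocks. -/
def T0Set (n M : ℕ) : Finset (Fin n × Fin n) :=
  Finset.univ.filter (fun p : Fin n × Fin n => p.1 ≠ p.2 ∧ ¬ sameBlock n M p.1 p.2)

/-- `T_0 \ ∪_{1 ≤ m ≤ M} T_m`, where the last index of block `m` is `m·(n/M) − 1`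
(0-based). -/
def TDiff (n M d : ℕ) : Finset (Fin n × Fin n) :=
  T0Set n M \ (Finset.range M).biUnion (fun m => TmSet n ((m + 1) * (n / M) - 1) d)

/-- `E₁ = Σ_{(k,ℓ): k≠ℓ, x_k ∼ x_ℓ} 1/(1 + S₀²‖x_k − x_ℓ‖²)`. -/
noncomputable def E1 (n M : ℕ) (S₀ : ℝ) : ℝ :=
  ∑ p ∈ Finset.univ.filter
      (fun p : Fin n × Fin n => p.1 ≠ p.2 ∧ sameBlock n M p.1 p.2),
    (1 + S₀ ^ 2 * ‖circlePt n p.1 - circlePt n p.2‖ ^ 2)⁻¹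

/-- `E₂ = |T_0 \ ∪_m T_m| / (1 + c²S₀²)`. -/
noncomputable def E2 (n M d : ℕ) (c S₀ : ℝ) : ℝ :=
  ((TDiff n M d).card : ℝ) / (1 + c ^ 2 * S₀ ^ 2)

/-- `E₃ = M·Σ_{j=1}^{d/2} j/(1 + c²S₀²)`. -/
noncomputable def E3 (n M d : ℕ) (c S₀ : ℝ) : ℝ :=
  (M : ℝ) * ∑ j ∈ Finset.Icc 1 (d / 2), (j : ℝ) / (1 + c ^ 2 * S₀ ^ 2)

/-- `E₄ = M·Σ_{j=1}^{d/2 − 1} j/(1 + c²S₀²)`. -/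
noncomputable def E4 (n M d : ℕ) (c S₀ : ℝ) : ℝ :=
  (M : ℝ) * ∑ j ∈ Finset.Icc 1 (d / 2 - 1), (j : ℝ) / (1 + c ^ 2 * S₀ ^ 2)

/-!
Write `n = M * B`, `S = n ^ τ₀`, `x = n / S = n ^ (1 - τ₀)` and
`K(t) = circleKernel n S t = (1 + S² (2 - 2 cos (2π t / n)))⁻¹`, so that the summand of `E₁`
for the pair `(k, ℓ)` is `K(ℓ - k)`. Grouping the pairs of a block by their gap gives the exact
formula `E₁ = 2M ∑_{j=1}^{B} (B - j) K(j)`. For `2j ≤ n` the chord satisfies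
`4j/n ≤ ‖x_k - x_ℓ‖ ≤ 2πj/n`, hence `K(j) ≥ 1/41` for `j ≤ x` and `K(j) ≤ min 1 (x² / (16 j²))`.
Keeping the gaps `j ≤ min (B/2) x` (and `B ≥ x / a` because `M ≤ a S`) gives `E₁ ≳ n x = n² / S`,
while splitting the sum at `j = ⌊x⌋` gives `E₁ ≤ (9/4) n x`. The other three terms are
nonnegative, `E₂ ≤ n² / (c² S²)` and `E₃ + E₄ ≤ M n^{2δ} / (2 c² S²)`.
-/

lemma norm_circlePt_sub_sq (n : ℕ) (k l : Fin n) :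
    ‖circlePt n k - circlePt n l‖ ^ 2 = 2 - 2 * cos (2 * π * ((l : ℝ) - k) / n) := by
  rw [EuclideanSpace.norm_sq_eq, Fin.sum_univ_two]
  simp only [circlePt, PiLp.sub_apply, Real.norm_eq_abs, sq_abs, Fin.isValue, if_pos,
    one_ne_zero, if_false]
  rw [mul_sub, sub_div, cos_sub]
  nlinarith [sin_sq_add_cos_sq (2 * π * (k : ℝ) / n), sin_sq_add_cos_sq (2 * π * (l : ℝ) / n)]

lemma two_sub_two_cos_nonneg (t : ℝ) : 0 ≤ 2 - 2 * cos t := by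
  linarith [cos_le_one t]

lemma two_sub_two_cos_le_sq (t : ℝ) : 2 - 2 * cos t ≤ t ^ 2 := by
  linarith [one_sub_sq_div_two_le_cos (x := t)]

lemma sq_two_mul_div_pi_le_two_sub_two_cos {t : ℝ} (ht₀ : 0 ≤ t) (ht : t ≤ π) :
    (2 * t / π) ^ 2 ≤ 2 - 2 * cos t := by
  have hsin : t / π ≤ sin (t / 2) := by
    have := mul_le_sin (x := t / 2) (by linarith) (by linarith)
    calc t / π = 2 / π * (t / 2) := by ring
      _ ≤ _ := this
  have hcos : 2 - 2 * cos t = 4 * sin (t / 2) ^ 2 := by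
    have h2 : cos t = cos (2 * (t / 2)) := by ring_nf
    rw [h2, cos_two_mul']
    linarith [cos_sq_add_sin_sq (t / 2)]
  rw [hcos, show (2 * t / π) ^ 2 = 4 * (t / π) ^ 2 by ring]
  gcongr

lemma sum_range_sum_range_sub_of_even (g : ℝ → ℝ) (hg : ∀ t, g (-t) = g t) (B : ℕ) :
    ∑ r ∈ range B, ∑ s ∈ range B, g ((s : ℝ) - r) =
      B * g 0 + 2 * ∑ j ∈ Icc 1 B, ((B : ℝ) - j) * g j := by
  induction B with
  | zero => simp
  | succ B ih =>
    have hreflect : ∑ r ∈ range B, g ((B : ℝ) - r) = ∑ j ∈ Icc 1 B, g j := by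
      refine sum_nbij' (fun r => B - r) (fun j => B - j) ?_ ?_ ?_ ?_ ?_ <;>
        intro r hr <;> simp only [mem_range, mem_Icc] at hr ⊢
      · omega
      · omega
      · omega
      · omega
      · rw [Nat.cast_sub hr.le]
    have hmirror : ∑ s ∈ range B, g ((s : ℝ) - B) = ∑ r ∈ range B, g ((B : ℝ) - r) :=
      sum_congr rfl fun s _ => by rw [← hg, neg_sub]
    simp only [sum_range_succ, sum_add_distrib, ih, hmirror, hreflect,
      sum_Icc_succ_top (Nat.le_add_left 1 B)]
    push_cast
    simp only [sub_self, zero_mul, add_zero]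
    have hsplit : ∑ j ∈ Icc 1 B, ((B : ℝ) + 1 - j) * g j =
        ∑ j ∈ Icc 1 B, ((B : ℝ) - j) * g j + ∑ j ∈ Icc 1 B, g j := by
      rw [← sum_add_distrib]
      exact sum_congr rfl fun j _ => by ring
    rw [hsplit]
    ring

lemma sameBlock_finProdFinEquiv {M B : ℕ} (hM : 0 < M) (a b : Fin M × Fin B) :
    sameBlock (M * B) M (finProdFinEquiv a) (finProdFinEquiv b) ↔ a.1 = b.1 := by
  have hB : 0 < B := Fin.pos a.2
  simp only [sameBlock, Nat.mul_div_cancel_left B hM, finProdFinEquiv_apply_val,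
    Nat.add_mul_div_left _ _ hB, Nat.div_eq_of_lt a.2.2, Nat.div_eq_of_lt b.2.2, zero_add,
    Fin.val_inj]

noncomputable def circleKernel (n : ℕ) (S t : ℝ) : ℝ :=
  (1 + S ^ 2 * (2 - 2 * cos (2 * π * t / n)))⁻¹

lemma circleKernel_neg (n : ℕ) (S t : ℝ) : circleKernel n S (-t) = circleKernel n S t := by
  simp only [circleKernel, mul_neg, neg_div, cos_neg]

lemma circleKernel_zero (n : ℕ) (S : ℝ) : circleKernel n S 0 = 1 := by
  simp [circleKernel]

lemma E1_mul_eq_sum_blocks {M B : ℕ} (hM : 0 < M) (S : ℝ) :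
    E1 (M * B) M S = M * ∑ r : Fin B, ∑ s : Fin B,
      if r ≠ s then circleKernel (M * B) S ((s : ℝ) - r) else 0 := by
  set e : Fin M × Fin B ≃ Fin (M * B) := finProdFinEquiv
  have hval : ∀ a : Fin M × Fin B, ((e a : ℕ) : ℝ) = a.2 + B * a.1 := fun a => by
    simp [e, finProdFinEquiv_apply_val]
  have hblock : ∀ a b, sameBlock (M * B) M (e a) (e b) ↔ a.1 = b.1 :=
    sameBlock_finProdFinEquiv hM
  calc E1 (M * B) M S
      = ∑ _q : Fin M, ∑ r : Fin B, ∑ s : Fin B,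
          if r ≠ s then circleKernel (M * B) S ((s : ℝ) - r) else 0 := by
        rw [E1, sum_filter, Fintype.sum_prod_type, ← e.sum_comp]
        simp only [← e.sum_comp, Fintype.sum_prod_type]
        refine sum_congr rfl fun q _ => sum_congr rfl fun r _ => ?_
        rw [Fintype.sum_eq_single q]
        · refine sum_congr rfl fun s _ => ?_
          simp only [e.injective.ne_iff, hblock, and_true, ne_eq, Prod.mk.injEq, true_and]
          split_ifs
          · rfl
          · rw [norm_circlePt_sub_sq, hval, hval, circleKernel]
            ring_nf
        · intro q' hq'
          refine sum_eq_zero fun s _ => if_neg ?_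
          rw [hblock]
          exact fun h => hq' h.2.symm
    _ = _ := by rw [sum_const, card_univ, Fintype.card_fin, nsmul_eq_mul]

lemma E1_mul_eq_sum_circleKernel {M B : ℕ} (hM : 0 < M) (S : ℝ) :
    E1 (M * B) M S = 2 * M * ∑ j ∈ Icc 1 B, ((B : ℝ) - j) * circleKernel (M * B) S j := by
  set f := circleKernel (M * B) S
  have hdiag : ∀ r s : Fin B,
      (if r ≠ s then f ((s : ℝ) - r) else 0) = f ((s : ℝ) - r) - if r = s then 1 else 0 := by
    intro r s
    by_cases h : r = s
    · simp [h, f, circleKernel_zero]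
    · simp [h]
  have hrange : ∑ r : Fin B, ∑ s : Fin B, f ((s : ℝ) - r) =
      ∑ r ∈ range B, ∑ s ∈ range B, f ((s : ℝ) - r) := by
    rw [Fin.sum_univ_eq_sum_range (fun r => ∑ s : Fin B, f ((s : ℝ) - r))]
    exact sum_congr rfl fun r _ => Fin.sum_univ_eq_sum_range (fun s => f ((s : ℝ) - r)) B
  simp only [E1_mul_eq_sum_blocks hM, hdiag, sum_sub_distrib, sum_ite_eq, mem_univ, if_true,
    sum_const, card_univ, Fintype.card_fin, nsmul_eq_mul, mul_one, hrange,
    sum_range_sum_range_sub_of_even f (circleKernel_neg _ S), f, circleKernel_zero]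
  ring

lemma one_le_one_add_sq_mul_two_sub_two_cos (n : ℕ) (S t : ℝ) :
    1 ≤ 1 + S ^ 2 * (2 - 2 * cos (2 * π * t / n)) :=
  le_add_of_nonneg_right (mul_nonneg (sq_nonneg S) (two_sub_two_cos_nonneg _))

lemma circleKernel_nonneg (n : ℕ) (S t : ℝ) : 0 ≤ circleKernel n S t :=
  inv_nonneg.2 (zero_le_one.trans (one_le_one_add_sq_mul_two_sub_two_cos n S t))

lemma circleKernel_le_one (n : ℕ) (S t : ℝ) : circleKernel n S t ≤ 1 :=
  inv_le_one_of_one_le₀ (one_le_one_add_sq_mul_two_sub_two_cos n S t)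

lemma inv_one_add_four_mul_pi_sq_le_circleKernel {n : ℕ} {S t : ℝ} (h : |S * t| ≤ n) :
    (1 + 4 * π ^ 2)⁻¹ ≤ circleKernel n S t := by
  have hst : (S * t / n) ^ 2 ≤ 1 := by
    rw [sq_le_one_iff_abs_le_one, abs_div, Nat.abs_cast]
    exact div_le_one_of_le₀ h (Nat.cast_nonneg n)
  have hchord : S ^ 2 * (2 - 2 * cos (2 * π * t / n)) ≤ 4 * π ^ 2 :=
    calc S ^ 2 * (2 - 2 * cos (2 * π * t / n)) ≤ S ^ 2 * (2 * π * t / n) ^ 2 :=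
          mul_le_mul_of_nonneg_left (two_sub_two_cos_le_sq _) (sq_nonneg S)
      _ = 4 * π ^ 2 * (S * t / n) ^ 2 := by ring
      _ ≤ 4 * π ^ 2 := mul_le_of_le_one_right (by positivity) hst
  exact inv_anti₀ (zero_lt_one.trans_le (one_le_one_add_sq_mul_two_sub_two_cos n S t))
    (by linarith)

lemma circleKernel_le_div_sq {n : ℕ} {S t : ℝ} (hS : 0 < S) (ht : 0 < t) (htn : 2 * t ≤ n) :
    circleKernel n S t ≤ (n / (4 * S)) ^ 2 / t ^ 2 := by
  have hn : (0 : ℝ) < n := by linarith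
  have hchord : (4 * t / n) ^ 2 ≤ 2 - 2 * cos (2 * π * t / n) := by
    have hangle : 2 * π * t / n ≤ π := by
      rw [div_le_iff₀ hn]
      nlinarith [pi_pos]
    have := sq_two_mul_div_pi_le_two_sub_two_cos (by positivity) hangle
    convert this using 2
    field_simp
    ring
  calc circleKernel n S t ≤ (S ^ 2 * (4 * t / n) ^ 2)⁻¹ :=
        inv_anti₀ (by positivity) (by nlinarith [sq_nonneg S])
    _ = (n / (4 * S)) ^ 2 / t ^ 2 := by
        field_simp

lemma sum_Icc_min_one_div_sq_le {C : ℝ} (hC : 0 ≤ C) (K : ℕ) {J : ℕ} (hJ : J ≠ 0) :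
    ∑ j ∈ Icc 1 K, min 1 (C / (j : ℝ) ^ 2) ≤ J + C / J := by
  rw [← sum_filter_add_sum_filter_not (Icc 1 K) (· ≤ J)]
  gcongr ?_ + ?_
  · calc _ ≤ ∑ j ∈ (Icc 1 K).filter (· ≤ J), (1 : ℝ) := sum_le_sum fun j _ => min_le_left _ _
      _ ≤ ∑ j ∈ Icc 1 J, (1 : ℝ) := sum_le_sum_of_subset_of_nonneg
          (fun j hj => by simp only [mem_filter, mem_Icc] at hj ⊢; omega)
          (fun _ _ _ => zero_le_one)
      _ = J := by simp
  · calc _ ≤ ∑ j ∈ (Icc 1 K).filter (¬ · ≤ J), C * ((j : ℝ) ^ 2)⁻¹ :=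
          sum_le_sum fun j _ => (min_le_right _ _).trans_eq (div_eq_mul_inv _ _)
      _ ≤ ∑ j ∈ Ioc J (max J K), C * ((j : ℝ) ^ 2)⁻¹ := sum_le_sum_of_subset_of_nonneg
          (fun j hj => by simp only [mem_filter, mem_Icc, mem_Ioc] at hj ⊢; omega)
          (fun _ _ _ => by positivity)
      _ = C * ∑ j ∈ Ioc J (max J K), ((j : ℝ) ^ 2)⁻¹ := (mul_sum _ _ _).symm
      _ ≤ C * (J : ℝ)⁻¹ := by
          gcongr
          exact (sum_Ioc_inv_sq_le_sub hJ (le_max_left _ _)).trans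
            (sub_le_self _ (by positivity))
      _ = C / J := (div_eq_mul_inv _ _).symm

lemma E1_mul_le_of_cutoff {M B : ℕ} (hM : 2 ≤ M) {S : ℝ} (hS : 0 < S) {J : ℕ} (hJ : J ≠ 0) :
    E1 (M * B) M S ≤ 2 * (M * B) * (J + (M * B / (4 * S)) ^ 2 / J) := by
  set C : ℝ := (M * B / (4 * S)) ^ 2
  have hterm : ∀ j ∈ Icc 1 B,
      ((B : ℝ) - j) * circleKernel (M * B) S j ≤ B * min 1 (C / (j : ℝ) ^ 2) := by
    intro j hj
    rw [mem_Icc] at hj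
    have hjB : (j : ℝ) ≤ B := by exact_mod_cast hj.2
    have h2j : 2 * (j : ℝ) ≤ ((M * B : ℕ) : ℝ) := by
      push_cast
      have : (2 : ℝ) ≤ M := by exact_mod_cast hM
      nlinarith
    have hkernel : circleKernel (M * B) S j ≤ min 1 (C / (j : ℝ) ^ 2) := by
      refine le_min (circleKernel_le_one _ _ _) ?_
      have := circleKernel_le_div_sq hS (by exact_mod_cast hj.1) h2j
      simpa [C] using this
    exact mul_le_mul (by linarith [(Nat.cast_nonneg j : (0 : ℝ) ≤ j)]) hkernel
      (circleKernel_nonneg _ _ _) (Nat.cast_nonneg B)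
  calc E1 (M * B) M S
      ≤ 2 * M * ∑ j ∈ Icc 1 B, (B : ℝ) * min 1 (C / (j : ℝ) ^ 2) := by
        rw [E1_mul_eq_sum_circleKernel (by omega)]
        exact mul_le_mul_of_nonneg_left (sum_le_sum hterm) (by positivity)
    _ = 2 * (M * B) * ∑ j ∈ Icc 1 B, min 1 (C / (j : ℝ) ^ 2) := by
        rw [← mul_sum]
        ring
    _ ≤ 2 * (M * B) * (J + C / J) := by
        gcongr
        exact sum_Icc_min_one_div_sq_le (by positivity) B hJ

lemma E1_mul_ge_of_cutoff {M B : ℕ} (hM : 0 < M) {S : ℝ} (hS : 0 ≤ S) {J : ℕ} (hJB : 2 * J ≤ B)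
    (hSJ : S * J ≤ M * B) :
    M * B * J * (1 + 4 * π ^ 2)⁻¹ ≤ E1 (M * B) M S := by
  have hterm : ∀ j ∈ Icc 1 J,
      (B : ℝ) / 2 * (1 + 4 * π ^ 2)⁻¹ ≤ ((B : ℝ) - j) * circleKernel (M * B) S j := by
    intro j hj
    rw [mem_Icc] at hj
    have hjJ : (j : ℝ) ≤ J := by exact_mod_cast hj.2
    have hJB' : 2 * (J : ℝ) ≤ B := by exact_mod_cast hJB
    refine mul_le_mul (by linarith) (inv_one_add_four_mul_pi_sq_le_circleKernel ?_)
      (by positivity) (by linarith)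
    rw [abs_of_nonneg (by positivity)]
    push_cast
    nlinarith
  calc (M : ℝ) * B * J * (1 + 4 * π ^ 2)⁻¹
      = 2 * M * ∑ j ∈ Icc 1 J, (B : ℝ) / 2 * (1 + 4 * π ^ 2)⁻¹ := by
        simp only [sum_const, Nat.card_Icc, add_tsub_cancel_right, nsmul_eq_mul]
        ring
    _ ≤ 2 * M * ∑ j ∈ Icc 1 J, ((B : ℝ) - j) * circleKernel (M * B) S j :=
        mul_le_mul_of_nonneg_left (sum_le_sum hterm) (by positivity)
    _ ≤ 2 * M * ∑ j ∈ Icc 1 B, ((B : ℝ) - j) * circleKernel (M * B) S j := by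
        refine mul_le_mul_of_nonneg_left (sum_le_sum_of_subset_of_nonneg
          (Icc_subset_Icc_right (by omega)) fun j hj _ => ?_) (by positivity)
        rw [mem_Icc] at hj
        have : (j : ℝ) ≤ B := by exact_mod_cast hj.2
        exact mul_nonneg (by linarith) (circleKernel_nonneg _ _ _)
    _ = E1 (M * B) M S := (E1_mul_eq_sum_circleKernel hM S).symm

lemma E2_nonneg (n M d : ℕ) (c S : ℝ) : 0 ≤ E2 n M d c S := by
  unfold E2
  positivity

lemma E2_le (n M d : ℕ) {c S : ℝ} (hc : 0 < c) (hS : 0 < S) :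
    E2 n M d c S ≤ n ^ 2 / (c ^ 2 * S ^ 2) := by
  have hcard : ((TDiff n M d).card : ℝ) ≤ n ^ 2 := by
    have := (TDiff n M d).card_le_univ
    rw [Fintype.card_prod, Fintype.card_fin, ← sq] at this
    exact_mod_cast this
  exact div_le_div₀ (by positivity) hcard (by positivity) (by linarith)

lemma E3_nonneg (n M d : ℕ) (c S : ℝ) : 0 ≤ E3 n M d c S := by
  unfold E3
  positivity

lemma E4_nonneg (n M d : ℕ) (c S : ℝ) : 0 ≤ E4 n M d c S := by
  unfold E4
  positivity

lemma mul_sum_Icc_div_le (M : ℕ) {k : ℕ} {K c S : ℝ} (hk : (k : ℝ) ≤ K) (hc : 0 < c)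
    (hS : 0 < S) :
    (M : ℝ) * ∑ j ∈ Icc 1 k, (j : ℝ) / (1 + c ^ 2 * S ^ 2) ≤ M * K ^ 2 / (c ^ 2 * S ^ 2) := by
  have hterm : ∀ j ∈ Icc 1 k, (j : ℝ) / (1 + c ^ 2 * S ^ 2) ≤ K / (c ^ 2 * S ^ 2) := by
    intro j hj
    have hjk : (j : ℝ) ≤ k := by exact_mod_cast (mem_Icc.1 hj).2
    exact div_le_div₀ (by linarith [(Nat.cast_nonneg j : (0 : ℝ) ≤ j)]) (hjk.trans hk)
      (by positivity) (by linarith)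
  have hsum := sum_le_card_nsmul _ _ _ hterm
  rw [Nat.card_Icc, add_tsub_cancel_right, nsmul_eq_mul] at hsum
  have hK : 0 ≤ K := (Nat.cast_nonneg k).trans hk
  calc (M : ℝ) * ∑ j ∈ Icc 1 k, (j : ℝ) / (1 + c ^ 2 * S ^ 2)
      ≤ M * (K * (K / (c ^ 2 * S ^ 2))) := by
        gcongr
        exact hsum.trans (by gcongr)
    _ = M * K ^ 2 / (c ^ 2 * S ^ 2) := by ring

lemma E3_add_E4_le (n M d : ℕ) {c S : ℝ} (hc : 0 < c) (hS : 0 < S) :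
    E3 n M d c S + E4 n M d c S ≤ M * d ^ 2 / (2 * c ^ 2 * S ^ 2) := by
  have hhalf : ((d / 2 : ℕ) : ℝ) ≤ d / 2 := Nat.cast_div_le
  have hhalf' : ((d / 2 - 1 : ℕ) : ℝ) ≤ d / 2 :=
    le_trans (by exact_mod_cast Nat.sub_le _ _) hhalf
  calc E3 n M d c S + E4 n M d c S
      ≤ M * (d / 2 : ℝ) ^ 2 / (c ^ 2 * S ^ 2) + M * (d / 2 : ℝ) ^ 2 / (c ^ 2 * S ^ 2) :=
        add_le_add (mul_sum_Icc_div_le M hhalf hc hS) (mul_sum_Icc_div_le M hhalf' hc hS)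
    _ = M * d ^ 2 / (2 * c ^ 2 * S ^ 2) := by ring

lemma half_le_natFloor {x : ℝ} (hx : 1 ≤ x) : x / 2 ≤ ⌊x⌋₊ := by
  have h1 : (1 : ℝ) ≤ ⌊x⌋₊ := by exact_mod_cast (Nat.one_le_floor_iff x).2 hx
  linarith [Nat.lt_floor_add_one x]

lemma E1_mul_le_of_mul_eq {M B : ℕ} (hM : 2 ≤ M) {S x : ℝ} (hS : 0 < S) (hx : 1 ≤ x)
    (hSx : S * x = M * B) :
    E1 (M * B) M S ≤ 9 / 4 * (M * B * x) := by
  have hJ : ⌊x⌋₊ ≠ 0 := (Nat.floor_pos.2 hx).ne'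
  have hJx : (⌊x⌋₊ : ℝ) ≤ x := Nat.floor_le (by linarith)
  have hxJ := half_le_natFloor hx
  have hscale : (M * B / (4 * S) : ℝ) = x / 4 := by
    rw [← hSx]
    field_simp
  have htail : (x / 4) ^ 2 / ⌊x⌋₊ ≤ x / 8 := by
    rw [div_le_iff₀ (by linarith)]
    nlinarith
  calc E1 (M * B) M S ≤ 2 * (M * B) * (⌊x⌋₊ + (M * B / (4 * S)) ^ 2 / ⌊x⌋₊) :=
        E1_mul_le_of_cutoff hM hS hJ
    _ ≤ 2 * (M * B) * (x + x / 8) := by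
        rw [hscale]
        gcongr
    _ = 9 / 4 * (M * B * x) := by ring

lemma E1_mul_ge_of_mul_eq {M B : ℕ} (hM : 0 < M) (hB : 2 ≤ B) {a S x : ℝ} (ha : 0 < a)
    (hS : 0 < S) (hx : 1 ≤ x) (hSx : S * x = M * B) (hMa : (M : ℝ) ≤ a * S) :
    (41 * (3 * a + 2))⁻¹ * (M * B * x) ≤ E1 (M * B) M S := by
  set J := min (B / 2) ⌊x⌋₊ with hJdef
  have hJx : (J : ℝ) ≤ x := (Nat.cast_le.2 (min_le_right _ _)).trans (Nat.floor_le (by linarith))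
  have hxJ : x ≤ (3 * a + 2) * J := by
    rcases min_cases (B / 2) ⌊x⌋₊ with ⟨hJ, -⟩ | ⟨hJ, -⟩ <;> rw [hJdef, hJ]
    · have h3 : (B : ℝ) ≤ 3 * (B / 2 : ℕ) := by exact_mod_cast (by omega : B ≤ 3 * (B / 2))
      have haB : x ≤ a * B := le_of_mul_le_mul_left (by nlinarith) hS
      nlinarith
    · nlinarith [half_le_natFloor hx]
  have hπ : 1 + 4 * π ^ 2 ≤ 41 := by nlinarith [pi_lt_d2, pi_pos]
  calc (41 * (3 * a + 2))⁻¹ * (M * B * x) = M * B * 41⁻¹ * (x / (3 * a + 2)) := by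
        rw [mul_inv]
        ring
    _ ≤ M * B * 41⁻¹ * J := by
        gcongr
        rwa [div_le_iff₀ (by positivity), mul_comm]
    _ ≤ M * B * J * (1 + 4 * π ^ 2)⁻¹ := by
        rw [mul_right_comm]
        gcongr
    _ ≤ E1 (M * B) M S := E1_mul_ge_of_cutoff hM hS.le (by omega) (by rw [← hSx]; gcongr)

lemma E1_add_E2_add_E3_add_E4_le {M B : ℕ} (d : ℕ) (hM : 2 ≤ M) {c S x : ℝ} (hc : 0 < c)
    (hS : 1 ≤ S) (hx : 1 ≤ x) (hSx : S * x = M * B) :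
    E1 (M * B) M S + E2 (M * B) M d c S + E3 (M * B) M d c S + E4 (M * B) M d c S ≤
      (3 + (c ^ 2)⁻¹) * (M * B * x + M * d ^ 2 / S ^ 2) := by
  have hS0 : 0 < S := by linarith
  have hE1 := E1_mul_le_of_mul_eq hM hS0 hx hSx
  have hE2 : E2 (M * B) M d c S ≤ (c ^ 2)⁻¹ * (M * B * x) :=
    calc E2 (M * B) M d c S ≤ ((M * B : ℕ) : ℝ) ^ 2 / (c ^ 2 * S ^ 2) := E2_le _ _ _ hc hS0
      _ = (c ^ 2)⁻¹ * (M * B * x) / S := by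
        push_cast
        rw [← hSx]
        field_simp
      _ ≤ (c ^ 2)⁻¹ * (M * B * x) := div_le_self (by positivity) hS
  have hE34 : E3 (M * B) M d c S + E4 (M * B) M d c S ≤ (c ^ 2)⁻¹ / 2 * (M * d ^ 2 / S ^ 2) :=
    (E3_add_E4_le _ _ _ hc hS0).trans_eq (by field_simp)
  have hX : 0 ≤ (M : ℝ) * B * x := by positivity
  have hY : 0 ≤ (M : ℝ) * d ^ 2 / S ^ 2 := by positivity
  have hc2 : 0 ≤ (c ^ 2)⁻¹ := by positivity
  nlinarith

theorem stmt6_general (τ₀ c a : ℝ) (hτ0 : 0 < τ₀) (hτ1 : τ₀ < 1)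
    (hc0 : 0 < c) (ha : 0 < a) :
    ∃ c₁ C₁ : ℝ, 0 < c₁ ∧ 0 < C₁ ∧ ∃ N : ℕ, ∀ n : ℕ, N ≤ n →
      ∀ M : ℕ, M ∣ n → 3 ≤ M → (M : ℝ) ≤ a * (n : ℝ) ^ τ₀ →
      ∀ (δ : ℝ) (d : ℕ), 0 < δ → δ < 1 → (d : ℝ) = (n : ℝ) ^ δ → Even d → d < n / M →
        c₁ * ((n : ℝ) ^ 2 / (n : ℝ) ^ τ₀) ≤
          E1 n M ((n : ℝ) ^ τ₀) + E2 n M d c ((n : ℝ) ^ τ₀) +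
            E3 n M d c ((n : ℝ) ^ τ₀) + E4 n M d c ((n : ℝ) ^ τ₀) ∧
        E1 n M ((n : ℝ) ^ τ₀) + E2 n M d c ((n : ℝ) ^ τ₀) +
            E3 n M d c ((n : ℝ) ^ τ₀) + E4 n M d c ((n : ℝ) ^ τ₀) ≤
          C₁ * ((n : ℝ) ^ 2 / (n : ℝ) ^ τ₀ +
            (M : ℝ) * (n : ℝ) ^ (2 * δ) / ((n : ℝ) ^ τ₀) ^ 2) := by
  refine ⟨(41 * (3 * a + 2))⁻¹, 3 + (c ^ 2)⁻¹, by positivity, by positivity, 0, ?_⟩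
  rintro n - M ⟨B, rfl⟩ hM3 hMa δ d - - hd - hdB
  have hM : 0 < M := by omega
  rw [Nat.mul_div_cancel_left B hM] at hdB
  have hn : (1 : ℝ) ≤ (M * B : ℕ) := by exact_mod_cast Nat.mul_pos hM (by omega)
  set S := ((M * B : ℕ) : ℝ) ^ τ₀
  set x := ((M * B : ℕ) : ℝ) ^ (1 - τ₀)
  have hS : 1 ≤ S := one_le_rpow hn hτ0.le
  have hx : 1 ≤ x := one_le_rpow hn (by linarith)
  have hSx : S * x = M * B := by
    rw [← rpow_add (by linarith), add_sub_cancel, rpow_one]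
    push_cast
    ring
  have hd1 : 1 ≤ d := by exact_mod_cast (hd ▸ rpow_pos_of_pos (by linarith) δ : (0 : ℝ) < d)
  have hn2 : ((M * B : ℕ) : ℝ) ^ 2 / S = M * B * x := by
    push_cast
    rw [← hSx]
    field_simp
  have hd2 : ((M * B : ℕ) : ℝ) ^ (2 * δ) = d ^ 2 := by
    rw [hd, ← rpow_natCast, ← rpow_mul (by linarith)]
    ring_nf
  rw [hn2, hd2]
  refine ⟨?_, E1_add_E2_add_E3_add_E4_le d (by omega) hc0 hS hx hSx⟩
  have := E1_mul_ge_of_mul_eq hM (by omega) ha (by linarith) hx hSx hMa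
  linarith [E2_nonneg (M * B) M d c S, E3_nonneg (M * B) M d c S, E4_nonneg (M * B) M d c S]

/-- For every `τ₀ ∈ (0,1)`, `c ∈ (0,1)`, and `a > 0`, there exist constants
`c₁, C₁ > 0` and `N` such that for all `n ≥ N`, all `M ∣ n` with `3 ≤ M ≤ a·n^{τ₀}`, all
`δ ∈ (0,1)` with `n^δ` an even integer `d < n/M`, and `S₀ = n^{τ₀}`:
`c₁·n²/S₀ ≤ E₁+E₂+E₃+E₄ ≤ C₁·(n²/S₀ + M·n^{2δ}/S₀²)`. -/
theorem stmt6 (τ₀ c a : ℝ) (hτ0 : 0 < τ₀) (hτ1 : τ₀ < 1)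
    (hc0 : 0 < c) (hc1 : c < 1) (ha : 0 < a) :
    ∃ c₁ C₁ : ℝ, 0 < c₁ ∧ 0 < C₁ ∧ ∃ N : ℕ, ∀ n : ℕ, N ≤ n →
      ∀ M : ℕ, M ∣ n → 3 ≤ M → (M : ℝ) ≤ a * (n : ℝ) ^ τ₀ →
      ∀ (δ : ℝ) (d : ℕ), 0 < δ → δ < 1 → (d : ℝ) = (n : ℝ) ^ δ → Even d → d < n / M →
        c₁ * ((n : ℝ) ^ 2 / (n : ℝ) ^ τ₀) ≤
          E1 n M ((n : ℝ) ^ τ₀) + E2 n M d c ((n : ℝ) ^ τ₀) +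
            E3 n M d c ((n : ℝ) ^ τ₀) + E4 n M d c ((n : ℝ) ^ τ₀) ∧
        E1 n M ((n : ℝ) ^ τ₀) + E2 n M d c ((n : ℝ) ^ τ₀) +
            E3 n M d c ((n : ℝ) ^ τ₀) + E4 n M d c ((n : ℝ) ^ τ₀) ≤
          C₁ * ((n : ℝ) ^ 2 / (n : ℝ) ^ τ₀ +
            (M : ℝ) * (n : ℝ) ^ (2 * δ) / ((n : ℝ) ^ τ₀) ^ 2) :=
  stmt6_general τ₀ c a hτ0 hτ1 hc0 ha
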